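/- arXiv:2303.15529 — 3 statements merged into one kernel-verified Lean document; each statement's English description precedes it below -/
import Mathlib

section
/- Let e(t) denote the largest number of edges in a layered graph on t vertices. Then e(t) ≤ (1/2)·t·log₂(t)·(1+o(1)); that is, for every ε > 0 there exists t₀ such that every layered graph on t ≥ t₀ vertices has at most ((1+ε)/2)·t·log₂(t) edges. -/
/-!
A layered graph is in particular a subgraph of the hypercube `Q_n`, and `t` vertices of `Q_n`
span at most `(t/2)·log₂ t` edges. For the latter, split a vertex set `S` by whether its members
contain a fixed element `x` that separates two of them: the edges between the two halves `S₀`, `S₁`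
join `A` to `insert x A` and so form a matching, hence the number `P(S)` of ordered adjacent pairs
satisfies `P(S) ≤ P(S₀) + P(S₁) + 2·min(|S₀|, |S₁|)`. Induction then closes by the inequality
`a log₂ a + b log₂ b + 2·min(a, b) ≤ (a + b) log₂ (a + b)`, a consequence of the concavity of `log`.
-/

open SimpleGraph

/-- The hypercube graph `Q_n`: vertices are subsets of `[n]`, adjacent iff one contains the
other and their sizes differ by one. -/
def hypercube (n : ℕ) : SimpleGraph (Finset (Fin n)) where
  Adj A B := (A ⊆ B ∧ B.card = A.card + 1) ∨ (B ⊆ A ∧ A.card = B.card + 1)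
  symm := ⟨fun A B h => h.symm⟩
  loopless := by
    constructor
    intro A h
    rcases h with ⟨-, h⟩ | ⟨-, h⟩ <;> omega

/-- A graph is layered if it is isomorphic to a subgraph of an edge layer of a hypercube. -/
def IsLayered {V : Type*} (G : SimpleGraph V) : Prop :=
  ∃ (n k : ℕ) (f : V → Finset (Fin n)), Function.Injective f ∧
    (∀ v, (f v).card = k ∨ (f v).card + 1 = k) ∧
    ∀ u v, G.Adj u v → (hypercube n).Adj (f u) (f v)

/-- The number of edges of a graph. -/
noncomputable def numEdges {V : Type*} (G : SimpleGraph V) : ℕ := Nat.card G.edgeSet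

open Finset Real

namespace SimpleGraph

variable {V W : Type*} (G : SimpleGraph V) [DecidableRel G.Adj]

theorem card_interedges_union_left [DecidableEq V] {s₁ s₂ : Finset V} (h : Disjoint s₁ s₂)
    (t : Finset V) :
    #(G.interedges (s₁ ∪ s₂) t) = #(G.interedges s₁ t) + #(G.interedges s₂ t) := by
  rw [← card_union_of_disjoint (G.interedges_disjoint_left h t)]
  congr 1
  ext
  simp only [mem_union, mem_interedges_iff]
  tauto

theorem card_interedges_comm (s t : Finset V) :
    #(G.interedges s t) = #(G.interedges t s) :=
  have : Std.Symm G.Adj := ⟨fun _ _ h ↦ h.symm⟩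
  Rel.card_interedges_comm s t

theorem card_interedges_union_right [DecidableEq V] (s : Finset V) {t₁ t₂ : Finset V}
    (h : Disjoint t₁ t₂) :
    #(G.interedges s (t₁ ∪ t₂)) = #(G.interedges s t₁) + #(G.interedges s t₂) := by
  simp only [G.card_interedges_comm s, G.card_interedges_union_left h]

theorem two_mul_card_edgeFinset_le_card_interedges [Fintype V] [DecidableEq V] [DecidableEq W]
    {H : SimpleGraph W} [DecidableRel H.Adj] (f : G →g H) (hf : Function.Injective f) :
    2 * #G.edgeFinset ≤ #(H.interedges (univ.image f) (univ.image f)) := by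
  rw [← dart_card_eq_twice_card_edges, ← card_univ]
  refine card_le_card_of_injOn (fun d ↦ (f d.fst, f d.snd)) (fun d _ ↦ ?_) fun d _ d' _ h ↦ ?_
  · exact H.mk_mem_interedges_iff.2 ⟨mem_image_of_mem f (mem_univ _),
      mem_image_of_mem f (mem_univ _), f.map_adj d.adj⟩
  · simp only [Prod.mk.injEq] at h
    exact Dart.ext _ _ (Prod.ext (hf h.1) (hf h.2))

end SimpleGraph

namespace hypercube

variable {n : ℕ}

instance : DecidableRel (hypercube n).Adj :=
  fun A B ↦ inferInstanceAs (Decidable ((A ⊆ B ∧ _) ∨ (B ⊆ A ∧ _)))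

theorem eq_insert_of_adj {x : Fin n} {A B : Finset (Fin n)} (h : (hypercube n).Adj A B)
    (hA : x ∉ A) (hB : x ∈ B) : B = insert x A := by
  rcases h with ⟨hAB, hcard⟩ | ⟨hBA, -⟩
  · refine (eq_of_subset_of_card_le (insert_subset hB hAB) ?_).symm
    rw [card_insert_of_notMem hA, hcard]
  · exact absurd (hBA hB) hA

theorem card_interedges_le_min {x : Fin n} {s t : Finset (Finset (Fin n))}
    (hs : ∀ A ∈ s, x ∉ A) (ht : ∀ B ∈ t, x ∈ B) :
    #((hypercube n).interedges s t) ≤ min #s #t := by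
  have hpair : ∀ p ∈ (hypercube n).interedges s t,
      p = (p.1, insert x p.1) ∧ p = (p.2.erase x, p.2) := by
    intro p hp
    obtain ⟨h₁, h₂, hadj⟩ := (hypercube n).mem_interedges_iff.1 hp
    have hp₂ := eq_insert_of_adj hadj (hs _ h₁) (ht _ h₂)
    refine ⟨Prod.ext rfl hp₂, Prod.ext ?_ rfl⟩
    rw [hp₂, erase_insert (hs _ h₁)]
  refine le_min (card_le_card_of_injOn Prod.fst ?_ ?_) (card_le_card_of_injOn Prod.snd ?_ ?_)
  · exact fun p hp ↦ ((hypercube n).mem_interedges_iff.1 hp).1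
  · intro p hp q hq h
    rw [(hpair p hp).1, (hpair q hq).1, h]
  · exact fun p hp ↦ ((hypercube n).mem_interedges_iff.1 hp).2.1
  · intro p hp q hq h
    rw [(hpair p hp).2, (hpair q hq).2, h]

end hypercube

namespace Real

theorem mul_log_two_le_log_one_add {x : ℝ} (h₀ : 0 ≤ x) (h₁ : x ≤ 1) :
    x * log 2 ≤ log (1 + x) := by
  have h := strictConcaveOn_log_Ioi.concaveOn.2 (Set.mem_Ioi.2 one_pos)
    (Set.mem_Ioi.2 two_pos) (sub_nonneg.2 h₁) h₀ (sub_add_cancel 1 x)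
  simp only [smul_eq_mul, mul_one, log_one, mul_zero, zero_add] at h
  rwa [show 1 - x + x * 2 = 1 + x by ring] at h

theorem mul_log_add_mul_log_add_two_mul_mul_log_two_le {a b : ℝ} (ha : 0 ≤ a) (hab : a ≤ b) :
    a * log a + b * log b + 2 * a * log 2 ≤ (a + b) * log (a + b) := by
  rcases ha.eq_or_lt with rfl | ha
  · simp
  have hb : 0 < b := ha.trans_le hab
  have h₁ : log 2 + log a ≤ log (a + b) := by
    rw [← log_mul two_ne_zero ha.ne']
    exact log_le_log (by positivity) (by linarith)
  have h₂ : a / b * log 2 ≤ log (a + b) - log b := by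
    rw [← log_div (by positivity) hb.ne', add_div, div_self hb.ne', add_comm]
    exact mul_log_two_le_log_one_add (by positivity) ((div_le_one hb).2 hab)
  rw [div_mul_eq_mul_div, div_le_iff₀ hb] at h₂
  nlinarith

theorem mul_logb_add_mul_logb_add_two_mul_min_le {a b : ℝ} (ha : 0 ≤ a) (hb : 0 ≤ b) :
    a * logb 2 a + b * logb 2 b + 2 * min a b ≤ (a + b) * logb 2 (a + b) := by
  wlog hab : a ≤ b generalizing a b
  · have := this hb ha (le_of_not_ge hab)
    rwa [add_comm b, min_comm, add_comm (b * _)] at this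
  have hlog2 : 0 < log 2 := log_pos one_lt_two
  simp only [logb, min_eq_left hab, mul_div_assoc', ← add_div]
  rw [le_div_iff₀ hlog2, add_mul, div_mul_cancel₀ _ hlog2.ne']
  exact mul_log_add_mul_log_add_two_mul_mul_log_two_le ha hab

end Real

theorem Finset.exists_mem_notMem_of_one_lt_card {α : Type*} [DecidableEq α]
    {S : Finset (Finset α)} (hS : 1 < #S) : ∃ x, ∃ A ∈ S, ∃ B ∈ S, x ∈ A ∧ x ∉ B := by
  obtain ⟨A, hA, B, hB, hAB⟩ := one_lt_card.1 hS
  obtain ⟨x, hx⟩ := symmDiff_nonempty.2 hAB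
  rcases mem_symmDiff.1 hx with ⟨hxA, hxB⟩ | ⟨hxB, hxA⟩
  · exact ⟨x, A, hA, B, hB, hxA, hxB⟩
  · exact ⟨x, B, hB, A, hA, hxB, hxA⟩

namespace hypercube

variable {n : ℕ}

theorem interedges_eq_empty_of_card_le_one {S : Finset (Finset (Fin n))} (hS : #S ≤ 1) :
    (hypercube n).interedges S S = ∅ :=
  eq_empty_of_forall_notMem fun _ hp ↦
    have ⟨h₁, h₂, hadj⟩ := (hypercube n).mem_interedges_iff.1 hp
    (hypercube n).ne_of_adj hadj (card_le_one.1 hS _ h₁ _ h₂)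

theorem card_interedges_self_le (S : Finset (Finset (Fin n))) :
    (#((hypercube n).interedges S S) : ℝ) ≤ #S * logb 2 #S := by
  induction S using Finset.strongInduction with
  | H S ih =>
  rcases le_or_gt #S 1 with hS | hS
  · rw [interedges_eq_empty_of_card_le_one hS]
    interval_cases #S <;> simp
  obtain ⟨x, A, hA, B, hB, hxA, hxB⟩ := exists_mem_notMem_of_one_lt_card hS
  set S₀ := S.filter (x ∉ ·)
  set S₁ := S.filter (x ∈ ·)
  have hdisj : Disjoint S₀ S₁ := (disjoint_filter_filter_not S S (x ∈ ·)).symm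
  have hcard : #S₀ + #S₁ = #S := by
    rw [← card_union_of_disjoint hdisj, union_comm, filter_union_filter_not_eq (x ∈ ·)]
  have hcount : #((hypercube n).interedges S S) = #((hypercube n).interedges S₀ S₀) +
      #((hypercube n).interedges S₁ S₁) + 2 * #((hypercube n).interedges S₀ S₁) := by
    conv_lhs => rw [← filter_union_filter_not_eq (x ∈ ·) S, union_comm]
    rw [card_interedges_union_left _ hdisj, card_interedges_union_right _ _ hdisj,
      card_interedges_union_right _ _ hdisj, card_interedges_comm _ S₁ S₀]
    ring
  have hcross : #((hypercube n).interedges S₀ S₁) ≤ min #S₀ #S₁ :=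
    card_interedges_le_min (fun _ h ↦ (mem_filter.1 h).2) (fun _ h ↦ (mem_filter.1 h).2)
  have ih₀ := ih S₀ (filter_ssubset.2 ⟨A, hA, not_not.2 hxA⟩)
  have ih₁ := ih S₁ (filter_ssubset.2 ⟨B, hB, hxB⟩)
  calc (#((hypercube n).interedges S S) : ℝ)
      = #((hypercube n).interedges S₀ S₀) + #((hypercube n).interedges S₁ S₁) +
          2 * #((hypercube n).interedges S₀ S₁) := by exact_mod_cast hcount
    _ ≤ #S₀ * logb 2 #S₀ + #S₁ * logb 2 #S₁ + 2 * min (#S₀ : ℝ) #S₁ := by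
        gcongr
        exact_mod_cast hcross
    _ ≤ (#S₀ + #S₁) * logb 2 (#S₀ + #S₁) :=
        mul_logb_add_mul_logb_add_two_mul_min_le (Nat.cast_nonneg _) (Nat.cast_nonneg _)
    _ = #S * logb 2 #S := by rw [← hcard, Nat.cast_add]

end hypercube

theorem numEdges_le_of_injective_hom_hypercube {V : Type*} [Fintype V] {G : SimpleGraph V}
    {n : ℕ} (f : G →g hypercube n) (hf : Function.Injective f) :
    (numEdges G : ℝ) ≤ Fintype.card V * logb 2 (Fintype.card V) / 2 := by
  classical
  have hedges := G.two_mul_card_edgeFinset_le_card_interedges f hf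
  have hbound := hypercube.card_interedges_self_le (univ.image f)
  rw [card_image_of_injective _ hf, card_univ] at hbound
  rw [numEdges, Nat.card_eq_fintype_card, ← edgeFinset_card, le_div_iff₀ two_pos]
  calc _ = ((2 * #G.edgeFinset : ℕ) : ℝ) := by push_cast; ring
    _ ≤ _ := by exact_mod_cast hedges
    _ ≤ _ := hbound

/-- Every layered graph on `t` vertices has at most `(1/2)·t·log₂ t·(1+o(1))` edges: for every
`ε > 0` there is `t₀` such that every layered graph on `t ≥ t₀` vertices has at most
`((1+ε)/2)·t·log₂ t` edges. -/
theorem layered_edge_bound (ε : ℝ) (hε : 0 < ε) :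
    ∃ t₀ : ℕ, ∀ t : ℕ, t₀ ≤ t → ∀ (V : Type) [Fintype V], ∀ G : SimpleGraph V,
      Fintype.card V = t → IsLayered G →
      (numEdges G : ℝ) ≤ ((1 + ε) / 2) * t * Real.logb 2 t := by
  refine ⟨1, fun t ht V _ G hcard ⟨n, _, f, hf, _, hadj⟩ ↦ ?_⟩
  have hbound := numEdges_le_of_injective_hom_hypercube ⟨f, hadj _ _⟩ hf
  rw [hcard] at hbound
  have hlog : 0 ≤ t * logb 2 t :=
    mul_nonneg (Nat.cast_nonneg t) (logb_nonneg one_lt_two (Nat.one_le_cast.2 ht))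
  nlinarith
end

section
/- Let G be a theta graph with poles a and a' and t legs each of length m, where t > ⌈m/2⌉. If G is embedded as a subgraph of an edge layer of a hypercube, then the Hamming distance between the images of a and a' is strictly less than m. -/
open SimpleGraph

/-- The theta graph with two poles (\`Sum.inl 0\` and \`Sum.inl 1\`) and \`k\` legs, each a
path of length \`m ≥ 2\` with \`m - 1\` internal vertices: leg \`i\` is
\`pole 0, (i,0), (i,1), …, (i,m-2), pole 1\`. -/
def thetaGraph (k m : ℕ) : SimpleGraph (Fin 2 ⊕ (Fin k × Fin (m - 1))) :=
  SimpleGraph.fromRel (fun x y =>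
    match x, y with
    | Sum.inl p, Sum.inr (_, l) => (p = 0 ∧ l.val = 0) ∨ (p = 1 ∧ l.val = m - 2)
    | Sum.inr (i, l), Sum.inr (i', l') => i = i' ∧ l.val + 1 = l'.val
    | _, _ => False)

/-!
If the Hamming distance between the poles were at least `m`, every leg, being a walk of length
`m`, would be a geodesic, so its first step toggles a coordinate `x i ∈ f a ∆ f a'`; by
injectivity the `t` coordinates `x i` are distinct. Inside an edge layer all neighbours of `f a`
are obtained by deleting a coordinate, or all by adding one, so the `x i` lie all in
`f a \ f a'` or all in `f a' \ f a`. As `|f a|` and `|f a'|` differ by at most one, this gives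
`m = #(f a ∆ f a') ≥ 2t - 1 > m`.
-/

open Finset Function
open scoped symmDiff

section Hamming

variable {α : Type*} [DecidableEq α]

def InEdgeLayer (k : ℕ) (s : Finset α) : Prop := #s = k ∨ #s + 1 = k

theorem Finset.card_symmDiff_le_add (s t u : Finset α) : #(s ∆ u) ≤ #(s ∆ t) + #(t ∆ u) :=
  (card_le_card (symmDiff_triangle s t u)).trans (card_union_le _ _)

theorem Finset.card_symmDiff_eq_add (s t : Finset α) : #(s ∆ t) = #(s \ t) + #(t \ s) :=
  card_union_of_disjoint disjoint_sdiff_sdiff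

theorem Finset.card_symmDiff_singleton_of_mem {s : Finset α} {x : α} (hx : x ∈ s) :
    #(s ∆ {x}) + 1 = #s := by
  rw [symmDiff_of_ge (singleton_subset_iff.2 hx), card_sdiff_of_subset (singleton_subset_iff.2 hx),
    card_singleton]
  have := card_pos.2 ⟨x, hx⟩
  omega

theorem Finset.card_symmDiff_singleton_of_notMem {s : Finset α} {x : α} (hx : x ∉ s) :
    #(s ∆ {x}) = #s + 1 := by
  rw [symmDiff_eq_union (disjoint_singleton_right.2 hx),
    card_union_of_disjoint (disjoint_singleton_right.2 hx), card_singleton]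

theorem Finset.mem_symmDiff_of_card_symmDiff_singleton_lt {s t : Finset α} {x : α}
    (h : #(s ∆ {x} ∆ t) < #(s ∆ t)) : x ∈ s ∆ t := by
  by_contra hx
  rw [symmDiff_right_comm, card_symmDiff_singleton_of_notMem hx] at h
  omega

theorem two_mul_card_le_of_forall_mem_sdiff {ι : Type*} [Fintype ι] {s t : Finset α}
    (hst : #s ≤ #t + 1) {x : ι → α} (hx : Injective x) (hxst : ∀ i, x i ∈ s \ t) :
    2 * Fintype.card ι ≤ #(s ∆ t) + 1 := by
  have hι : Fintype.card ι ≤ #(s \ t) := by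
    rw [← card_univ]
    exact card_le_card_of_injOn x (fun i _ => hxst i) hx.injOn
  have hs := card_sdiff_add_card_inter s t
  have ht := card_sdiff_add_card_inter t s
  rw [inter_comm] at ht
  rw [card_symmDiff_eq_add]
  omega

theorem two_mul_card_le_of_inEdgeLayer {ι : Type*} [Fintype ι] {k : ℕ} {s t : Finset α}
    (hs : InEdgeLayer k s) (ht : InEdgeLayer k t) {x : ι → α} (hx : Injective x)
    (hxst : ∀ i, x i ∈ s ∆ t) (hlayer : ∀ i, InEdgeLayer k (s ∆ {x i})) :
    2 * Fintype.card ι ≤ #(s ∆ t) + 1 := by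
  rcases hs with hs | hs
  · have hxs (i : ι) : x i ∈ s := by
      by_contra hxs
      have := card_symmDiff_singleton_of_notMem hxs
      rcases hlayer i with h | h <;> omega
    refine two_mul_card_le_of_forall_mem_sdiff (by rcases ht with h | h <;> omega) hx fun i => ?_
    exact mem_sdiff.2 ⟨hxs i, ((mem_symmDiff.1 (hxst i)).resolve_right fun h => h.2 (hxs i)).2⟩
  · have hxs (i : ι) : x i ∉ s := by
      intro hxs
      have := card_symmDiff_singleton_of_mem hxs
      rcases hlayer i with h | h <;> omega
    rw [symmDiff_comm]
    refine two_mul_card_le_of_forall_mem_sdiff (by rcases ht with h | h <;> omega) hx fun i => ?_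
    exact mem_sdiff.2 ((mem_symmDiff.1 (hxst i)).resolve_left fun h => hxs i h.1)

end Hamming

namespace hypercube

variable {n : ℕ} {s t : Finset (Fin n)}

theorem card_symmDiff_eq_one_of_adj (h : (hypercube n).Adj s t) : #(s ∆ t) = 1 := by
  rcases h with ⟨hst, hc⟩ | ⟨hts, hc⟩
  · rw [symmDiff_of_le hst, card_sdiff_of_subset hst]
    omega
  · rw [symmDiff_of_ge hts, card_sdiff_of_subset hts]
    omega

theorem exists_eq_symmDiff_singleton_of_adj (h : (hypercube n).Adj s t) :
    ∃ x, t = s ∆ {x} := by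
  obtain ⟨x, hx⟩ := card_eq_one.1 (card_symmDiff_eq_one_of_adj h)
  exact ⟨x, by rw [← hx, symmDiff_symmDiff_cancel_left]⟩

theorem card_symmDiff_le_length (p : (hypercube n).Walk s t) : #(s ∆ t) ≤ p.length := by
  induction p with
  | nil => simp only [symmDiff_self, bot_eq_empty, card_empty, Walk.length_nil, le_refl]
  | @cons u v w h p ih =>
    have := card_symmDiff_le_add u v w
    have := card_symmDiff_eq_one_of_adj h
    rw [Walk.length_cons]
    omega

end hypercube

namespace thetaGraph

variable {t m : ℕ}

theorem adj_inl_zero (i : Fin t) (j : Fin (m - 1)) (hj : j.val = 0) :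
    (thetaGraph t m).Adj (Sum.inl 0) (Sum.inr (i, j)) := by
  rw [thetaGraph, fromRel_adj]
  exact ⟨Sum.inl_ne_inr, Or.inl (Or.inl ⟨rfl, hj⟩)⟩

theorem adj_inl_one (i : Fin t) (j : Fin (m - 1)) (hj : j.val = m - 2) :
    (thetaGraph t m).Adj (Sum.inr (i, j)) (Sum.inl 1) := by
  rw [thetaGraph, fromRel_adj]
  exact ⟨Sum.inr_ne_inl, Or.inr (Or.inr ⟨rfl, hj⟩)⟩

theorem adj_inr (i : Fin t) (j j' : Fin (m - 1)) (hj : j.val + 1 = j'.val) :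
    (thetaGraph t m).Adj (Sum.inr (i, j)) (Sum.inr (i, j')) := by
  rw [thetaGraph, fromRel_adj]
  refine ⟨fun h => ?_, Or.inl ⟨rfl, hj⟩⟩
  simp only [Sum.inr.injEq, Prod.mk.injEq, Fin.ext_iff] at h
  omega

theorem exists_walk_inr_inl_one (i : Fin t) (j : Fin (m - 1)) :
    ∃ p : (thetaGraph t m).Walk (Sum.inr (i, j)) (Sum.inl 1), p.length = m - 1 - j := by
  induction hd : m - 2 - j.val generalizing j with
  | zero =>
    refine ⟨(adj_inl_one i j (by omega)).toWalk, ?_⟩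
    simp only [Walk.length_cons, Walk.length_nil]
    omega
  | succ d ih =>
    have hj : j.val + 1 < m - 1 := by omega
    obtain ⟨p, hp⟩ := ih ⟨j.val + 1, hj⟩ (by rw [Fin.val_mk]; omega)
    refine ⟨.cons (adj_inr i j ⟨j.val + 1, hj⟩ rfl) p, ?_⟩
    rw [Walk.length_cons, hp, Fin.val_mk]
    omega

end thetaGraph

/-- If the theta graph with `t` legs of length `m` each, `t > ⌈m/2⌉`, is embedded in an
edge layer of a hypercube (injectively, preserving adjacency, with all vertices of size `k`
or `k-1`), then the Hamming distance between the images of the two poles is less than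
`m`. -/
theorem theta_poles_close (t m n k : ℕ) (hm : 2 ≤ m) (ht : (m + 1) / 2 < t)
    (f : Fin 2 ⊕ (Fin t × Fin (m - 1)) → Finset (Fin n))
    (hinj : Function.Injective f)
    (hcard : ∀ v, (f v).card = k ∨ (f v).card + 1 = k)
    (hadj : ∀ u v, (thetaGraph t m).Adj u v → (hypercube n).Adj (f u) (f v)) :
    (symmDiff (f (Sum.inl 0)) (f (Sum.inl 1))).card < m := by
  have hm1 : 0 < m - 1 := by omega
  set A := f (Sum.inl 0)
  set A' := f (Sum.inl 1)
  let φ : thetaGraph t m →g hypercube n := ⟨f, hadj _ _⟩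
  let w (i : Fin t) : Fin 2 ⊕ (Fin t × Fin (m - 1)) := Sum.inr (i, ⟨0, hm1⟩)
  have hw_adj (i : Fin t) : (hypercube n).Adj A (f (w i)) :=
    hadj _ _ (thetaGraph.adj_inl_zero i _ rfl)
  have hw_dist (i : Fin t) : #(f (w i) ∆ A') ≤ m - 1 := by
    obtain ⟨p, hp⟩ := thetaGraph.exists_walk_inr_inl_one i ⟨0, hm1⟩
    have := hypercube.card_symmDiff_le_length (p.map φ)
    rwa [Walk.length_map, hp] at this
  have hpoles : #(A ∆ A') ≤ m := by
    let i₀ : Fin t := ⟨0, by omega⟩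
    calc #(A ∆ A') ≤ #(A ∆ f (w i₀)) + #(f (w i₀) ∆ A') := card_symmDiff_le_add _ _ _
      _ ≤ 1 + (m - 1) :=
        add_le_add (hypercube.card_symmDiff_eq_one_of_adj (hw_adj i₀)).le (hw_dist i₀)
      _ = m := by omega
  by_contra! hfar
  choose x hx using fun i => hypercube.exists_eq_symmDiff_singleton_of_adj (hw_adj i)
  have hx_inj : Injective x := fun i j hij => by
    have : f (w i) = f (w j) := by rw [hx i, hx j, hij]
    simpa [w] using hinj this
  have hx_mem (i : Fin t) : x i ∈ A ∆ A' :=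
    mem_symmDiff_of_card_symmDiff_singleton_lt (by rw [← hx i]; have := hw_dist i; omega)
  have hlegs : 2 * Fintype.card (Fin t) ≤ #(A ∆ A') + 1 :=
    two_mul_card_le_of_inEdgeLayer (hcard _) (hcard _) hx_inj hx_mem fun i => hx i ▸ hcard (w i)
  rw [Fintype.card_fin] at hlegs
  omega
end

section
/- There exists a cubical graph of girth 8 that is not layered. Concretely, let G'_8 be the theta graph with poles a, a' and three legs of length 4, let u be the neighbor of a on one leg and u' the neighbor of a' on another leg, and let G_8 be the union of G'_8 with a path of length 4 between u and u' internally disjoint from G'_8; then G_8 is cubical, has girth 8, and is not layered. -/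
open SimpleGraph

/-- `G` contains a copy of `H`, i.e. `H` is isomorphic to a subgraph of `G`. -/
def ContainsCopy {α β : Type*} (G : SimpleGraph α) (H : SimpleGraph β) : Prop :=
  ∃ f : β → α, Function.Injective f ∧ ∀ u v, H.Adj u v → G.Adj (f u) (f v)

/-- A graph is cubical if it is isomorphic to a subgraph of a hypercube. -/
def IsCubical {V : Type*} (G : SimpleGraph V) : Prop :=
  ∃ n : ℕ, ContainsCopy (hypercube n) G

/-- The graph `G_8`: the theta graph `G'_8` with poles `a, a'` and three legs of length
4, where `u = (0,0)` is the neighbor of `a` on leg 0 and `u' = (1,2)` is the neighbor of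
`a'` on leg 1, together with a path `u, q₀, q₁, q₂, u'` of length 4 internally disjoint
from `G'_8`. -/
def G8 : SimpleGraph ((Fin 2 ⊕ (Fin 3 × Fin 3)) ⊕ Fin 3) :=
  SimpleGraph.fromRel (fun x y =>
    match x, y with
    | Sum.inl a, Sum.inl b => (thetaGraph 3 4).Adj a b
    | Sum.inl (Sum.inr (i, l)), Sum.inr j =>
        (i = 0 ∧ l = 0 ∧ j = 0) ∨ (i = 1 ∧ l = 2 ∧ j = 2)
    | Sum.inr j, Sum.inr j' => j.val + 1 = j'.val
    | _, _ => False)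


/-!
The embedding into `Q_5` and the girth are finite checks. For the rest, complementing if
necessary, let the pole `a` sit on the lower level of a layering `f`, with `S = f a` and
`T = f a'`. Along a leg `a, uᵢ, mᵢ, vᵢ, a'` the image gains `xᵢ`, loses `yᵢ`, gains `zᵢ` and
loses `wᵢ`; injectivity forces `yᵢ ≠ xᵢ`, `zᵢ ≠ yᵢ`, `wᵢ ≠ zᵢ`, whence `zᵢ ∈ T \ S ⊆ {xᵢ, zᵢ}`.
Since the `xᵢ` are distinct, no `xᵢ` lies in `T`, so `wᵢ = xᵢ` and `f u' = f v₁ = T ∪ {x₁}`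
misses both `x₀` and `y₀`. But the first step of the extra path from `u = u₀` can remove
neither (it would reach `f a` or `f m₀`), and the three remaining steps remove only one element.
-/

open Finset

namespace SimpleGraph

variable {V : Type*} [Fintype V] [DecidableEq V] (G : SimpleGraph V) [DecidableRel G.Adj]

/-- The supports `[v₀, …, vₙ]` of the paths of length `n` ending at `vₙ = v`. -/
def pathSupportsTo : ℕ → V → Multiset (List V)
  | 0, v => {[v]}
  | n + 1, v => (pathSupportsTo n v).bind fun
      | [] => 0
      | p@(x :: _) => (univ.filter fun w => G.Adj w x ∧ w ∉ p).val.map (· :: p)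

variable {G}

theorem support_mem_pathSupportsTo {u v : V} {p : G.Walk u v} (hp : p.IsPath) :
    p.support ∈ G.pathSupportsTo p.length v := by
  induction p with
  | nil => simp [pathSupportsTo]
  | @cons a b _ h q ih =>
    rw [Walk.cons_isPath_iff] at hp
    rw [Walk.support_cons, Walk.length_cons, pathSupportsTo, Multiset.mem_bind]
    refine ⟨q.support, ih hp.1, ?_⟩
    obtain ⟨t, ht⟩ : ∃ t, q.support = b :: t := ⟨_, q.cons_tail_support.symm⟩
    rw [ht] at hp ⊢
    simpa [h] using hp.2

theorem Walk.IsCycle.length_ne {v : V} {c : G.Walk v v} (hc : c.IsCycle) {n : ℕ}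
    (h : ∀ p ∈ G.pathSupportsTo n v, ∀ x ∈ p.head?, ¬ G.Adj v x) : c.length ≠ n + 1 := by
  cases c with
  | nil => exact absurd hc Walk.not_isCycle_nil
  | @cons _ w _ hvw q =>
    rw [Walk.cons_isCycle_iff] at hc
    intro hlen
    rw [Walk.length_cons, Nat.add_right_cancel_iff] at hlen
    refine h _ (hlen ▸ support_mem_pathSupportsTo hc.1) w ?_ hvw
    rw [← q.cons_tail_support]
    rfl

theorem le_egirth_of_forall_pathSupportsTo {N : ℕ}
    (h : ∀ n, 2 ≤ n → n + 1 < N → ∀ v, ∀ p ∈ G.pathSupportsTo n v, ∀ x ∈ p.head?, ¬ G.Adj v x) :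
    (N : ℕ∞) ≤ G.egirth := by
  refine le_egirth.mpr fun v c hc => ?_
  by_contra! hlt
  have h3 := hc.three_le_length
  obtain ⟨n, hn⟩ : ∃ n, c.length = n + 1 := ⟨c.length - 1, by omega⟩
  exact hc.length_ne (h n (by omega) (by exact_mod_cast hn ▸ hlt) v) hn

end SimpleGraph

theorem hypercube_adj_compl {n : ℕ} {A B : Finset (Fin n)} :
    (hypercube n).Adj Aᶜ Bᶜ ↔ (hypercube n).Adj A B := by
  have hA := A.card_le_univ
  have hB := B.card_le_univ
  simp only [Fintype.card_fin] at hA hB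
  simp only [hypercube, compl_subset_compl, card_compl, Fintype.card_fin]
  constructor <;> rintro (⟨h, hc⟩ | ⟨h, hc⟩)
  · exact Or.inr ⟨h, by omega⟩
  · exact Or.inl ⟨h, by omega⟩
  · exact Or.inr ⟨h, by omega⟩
  · exact Or.inl ⟨h, by omega⟩

structure IsLayerEmbedding {V : Type*} (G : SimpleGraph V) {n : ℕ} (k : ℕ)
    (f : V → Finset (Fin n)) : Prop where
  injective : Function.Injective f
  card_eq : ∀ v, #(f v) = k ∨ #(f v) + 1 = k
  map_adj : ∀ ⦃u v⦄, G.Adj u v → (hypercube n).Adj (f u) (f v)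

namespace IsLayerEmbedding

variable {V : Type*} {G : SimpleGraph V} {n k : ℕ} {f : V → Finset (Fin n)}

theorem compl (hf : IsLayerEmbedding G k f) :
    IsLayerEmbedding G (n + 1 - k) fun v => (f v)ᶜ where
  injective := compl_injective.comp hf.injective
  card_eq v := by
    have hle := (f v).card_le_univ
    have hv := hf.card_eq v
    simp only [card_compl, Fintype.card_fin] at hle ⊢
    omega
  map_adj _ _ h := hypercube_adj_compl.mpr (hf.map_adj h)

variable {u v : V}

theorem exists_eq_insert (hf : IsLayerEmbedding G k f) (h : G.Adj u v) (hu : #(f u) + 1 = k) :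
    ∃ a ∉ f u, f v = insert a (f u) ∧ #(f v) = k := by
  rcases hf.map_adj h with hv | ⟨-, hv⟩
  · obtain ⟨a, ha, hva⟩ := exists_eq_insert_iff.mpr ⟨hv.1, hv.2.symm⟩
    exact ⟨a, ha, hva.symm, by omega⟩
  · have := hf.card_eq v
    omega

theorem exists_eq_erase (hf : IsLayerEmbedding G k f) (h : G.Adj u v) (hu : #(f u) = k) :
    ∃ a ∈ f u, f v = (f u).erase a ∧ #(f v) + 1 = k := by
  rcases hf.map_adj h with ⟨-, hv⟩ | hv
  · have := hf.card_eq v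
    omega
  · obtain ⟨a, ha, hva⟩ := exists_eq_insert_iff.mpr ⟨hv.1, hv.2.symm⟩
    refine ⟨a, hva ▸ mem_insert_self a _, ?_, by omega⟩
    rw [← hva, erase_insert ha]

theorem leg (hf : IsLayerEmbedding G k f) {a u m v a' : V} (ha : #(f a) + 1 = k)
    (h₁ : G.Adj a u) (h₂ : G.Adj u m) (h₃ : G.Adj m v) (h₄ : G.Adj v a')
    (hma : m ≠ a) (hvu : v ≠ u) (ham : a' ≠ m) :
    ∃ x y z, x ∉ f a ∧ f u = insert x (f a) ∧ y ∈ f a ∧ f m = (f u).erase y ∧ y ∉ f a' ∧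
      z ∈ f a' \ f a ∧ z ≠ x ∧ f a' \ f a ⊆ {x, z} ∧ (x ∉ f a' → f v = insert x (f a')) := by
  obtain ⟨x, hx, hu, hu'⟩ := hf.exists_eq_insert h₁ ha
  obtain ⟨y, hy, hm, hm'⟩ := hf.exists_eq_erase h₂ hu'
  obtain ⟨z, hz, hv, hv'⟩ := hf.exists_eq_insert h₃ hm'
  obtain ⟨w, hw, ha', -⟩ := hf.exists_eq_erase h₄ hv'
  have hyx : y ≠ x := by rintro rfl; exact hma (hf.injective (by rw [hm, hu, erase_insert hx]))
  have hzy : z ≠ y := by rintro rfl; exact hvu (hf.injective (by rw [hv, hm, insert_erase hy]))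
  have hwz : w ≠ z := by rintro rfl; exact ham (hf.injective (by rw [ha', hv, erase_insert hz]))
  rw [hu] at hy
  rw [hm, hu] at hz hv
  rw [hv] at hw ha'
  refine ⟨x, y, z, hx, hu, ?_, hm, ?_⟩
  · grind
  · rw [ha']
    grind

theorem mem_or_mem_of_walk (hf : IsLayerEmbedding G k f) {u q₀ q₁ q₂ u' : V}
    (h₁ : G.Adj u q₀) (h₂ : G.Adj q₀ q₁) (h₃ : G.Adj q₁ q₂) (h₄ : G.Adj q₂ u') (hu : #(f u) = k)
    {s t : Fin n} (hs : s ∈ f u) (ht : t ∈ f u) (hst : s ≠ t)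
    (hs₀ : f q₀ ≠ (f u).erase s) (ht₀ : f q₀ ≠ (f u).erase t) : s ∈ f u' ∨ t ∈ f u' := by
  obtain ⟨α, -, hq₀, hq₀'⟩ := hf.exists_eq_erase h₁ hu
  obtain ⟨β, -, hq₁, hq₁'⟩ := hf.exists_eq_insert h₂ hq₀'
  obtain ⟨γ, -, hq₂, hq₂'⟩ := hf.exists_eq_erase h₃ hq₁'
  obtain ⟨δ, -, hu', -⟩ := hf.exists_eq_insert h₄ hq₂'
  have hsurvive : ∀ r ∈ f u, r ≠ α → r ≠ γ → r ∈ f u' := fun r hr hrα hrγ => by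
    rw [hu', hq₂, hq₁, hq₀]
    exact mem_insert_of_mem (mem_erase.mpr ⟨hrγ, mem_insert_of_mem (mem_erase.mpr ⟨hrα, hr⟩)⟩)
  have hsα : s ≠ α := by rintro rfl; exact hs₀ hq₀
  have htα : t ≠ α := by rintro rfl; exact ht₀ hq₀
  by_cases hsγ : s = γ
  · exact .inr (hsurvive t ht htα (hsγ ▸ hst.symm))
  · exact .inl (hsurvive s hs hsα hsγ)

end IsLayerEmbedding

theorem notMem_of_forall_subset_pair {ι α : Type*} [DecidableEq α] {D : Finset α} {x z : ι → α}
    (hx : Function.Injective x) (hz : ∀ i, z i ∈ D) (hzx : ∀ i, z i ≠ x i)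
    (hD : ∀ i, D ⊆ {x i, z i}) {i j l : ι} (hij : i ≠ j) (hil : i ≠ l) (hjl : j ≠ l) :
    x i ∉ D := by
  intro hi
  have key : ∀ j, i ≠ j → z i = x j := fun j hij => by
    have hxz : x i = z j := by simpa [hx.ne hij] using hD j hi
    have hzi : z i = x j ∨ z i = z j := by simpa using hD j (hz i)
    exact hzi.resolve_right fun h => hzx i (h.trans hxz.symm)
  exact hjl (hx ((key j hij).symm.trans (key l hil)))

instance : DecidableRel (thetaGraph 3 4).Adj := fun a b => by
  rcases a with _ | ⟨_, _⟩ <;> rcases b with _ | ⟨_, _⟩ <;>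
    exact decidable_of_iff _ (fromRel_adj _ _ _).symm

instance : DecidableRel G8.Adj := fun a b => by
  rcases a with (_ | ⟨_, _⟩) | _ <;> rcases b with (_ | ⟨_, _⟩) | _ <;>
    exact decidable_of_iff _ (fromRel_adj _ _ _).symm

instance (n : ℕ) : DecidableRel (hypercube n).Adj := fun A B =>
  inferInstanceAs (Decidable ((A ⊆ B ∧ #B = #A + 1) ∨ (B ⊆ A ∧ #A = #B + 1)))

namespace G8

def pole (p : Fin 2) : (Fin 2 ⊕ (Fin 3 × Fin 3)) ⊕ Fin 3 := .inl (.inl p)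

def legVertex (i l : Fin 3) : (Fin 2 ⊕ (Fin 3 × Fin 3)) ⊕ Fin 3 := .inl (.inr (i, l))

def pathVertex (j : Fin 3) : (Fin 2 ⊕ (Fin 3 × Fin 3)) ⊕ Fin 3 := .inr j

def cubeEmbedding : (Fin 2 ⊕ (Fin 3 × Fin 3)) ⊕ Fin 3 → Finset (Fin 5)
  | .inl (.inl 0) => ∅
  | .inl (.inl 1) => {0, 1, 2, 3}
  | .inl (.inr (0, 0)) => {0}
  | .inl (.inr (0, 1)) => {0, 1}
  | .inl (.inr (0, 2)) => {0, 1, 2}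
  | .inl (.inr (1, 0)) => {2}
  | .inl (.inr (1, 1)) => {2, 3}
  | .inl (.inr (1, 2)) => {0, 2, 3}
  | .inl (.inr (2, 0)) => {1}
  | .inl (.inr (2, 1)) => {1, 3}
  | .inl (.inr (2, 2)) => {1, 2, 3}
  | .inr 0 => {0, 4}
  | .inr 1 => {0, 3, 4}
  | .inr 2 => {0, 3}

theorem isCubical : IsCubical G8 := ⟨5, cubeEmbedding, by decide, by decide⟩

def cycle : G8.Walk (pole 0) (pole 0) :=
  .cons (v := legVertex 0 0) (by decide) <| .cons (v := legVertex 0 1) (by decide) <|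
  .cons (v := legVertex 0 2) (by decide) <| .cons (v := pole 1) (by decide) <|
  .cons (v := legVertex 1 2) (by decide) <| .cons (v := legVertex 1 1) (by decide) <|
  .cons (v := legVertex 1 0) (by decide) <| .cons (v := pole 0) (by decide) .nil

theorem cycle_isCycle : cycle.IsCycle := ⟨⟨⟨by decide⟩, by simp [cycle]⟩, by decide⟩

theorem girth_eq : G8.girth = 8 := by
  have hle : G8.egirth ≤ 8 := egirth_le_length cycle_isCycle
  have hge : ((8 : ℕ) : ℕ∞) ≤ G8.egirth :=
    le_egirth_of_forall_pathSupportsTo (N := 8) fun n h₂ h₇ => by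
      replace h₇ : n < 7 := by omega
      interval_cases n <;> decide
  rw [girth, le_antisymm hle hge]
  rfl

theorem card_pole_add_one_ne {n k : ℕ} {f : (Fin 2 ⊕ (Fin 3 × Fin 3)) ⊕ Fin 3 → Finset (Fin n)}
    (hf : IsLayerEmbedding G8 k f) : #(f (pole 0)) + 1 ≠ k := by
  intro ha
  have hadj : ∀ i, G8.Adj (pole 0) (legVertex i 0) ∧ G8.Adj (legVertex i 0) (legVertex i 1) ∧
      G8.Adj (legVertex i 1) (legVertex i 2) ∧ G8.Adj (legVertex i 2) (pole 1) := by decide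
  have hne : ∀ i, legVertex i 1 ≠ pole 0 ∧ legVertex i 2 ≠ legVertex i 0 ∧
      pole 1 ≠ legVertex i 1 := by decide
  choose x y z hxS hu hyS hm hyT hzD hzx hD hv using fun i =>
    hf.leg ha (hadj i).1 (hadj i).2.1 (hadj i).2.2.1 (hadj i).2.2.2 (hne i).1 (hne i).2.1 (hne i).2.2
  have hx : Function.Injective x := fun i j hij => by
    have := hf.injective (by rw [hu, hu, hij] : f (legVertex i 0) = f (legVertex j 0))
    simpa [legVertex] using this
  have hxT : ∀ i j l, i ≠ j → i ≠ l → j ≠ l → x i ∉ f (pole 1) := fun _ _ _ hij hil hjl hxi =>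
    notMem_of_forall_subset_pair hx hzD hzx hD hij hil hjl (mem_sdiff.mpr ⟨hxi, hxS _⟩)
  have hu' := hv 1 (hxT 1 0 2 (by decide) (by decide) (by decide))
  have hs₀ : f (pathVertex 0) ≠ (f (legVertex 0 0)).erase (x 0) := by
    rw [hu, erase_insert (hxS 0)]
    exact fun h => (by decide : pathVertex 0 ≠ pole 0) (hf.injective h)
  have ht₀ : f (pathVertex 0) ≠ (f (legVertex 0 0)).erase (y 0) := by
    rw [← hm]
    exact fun h => (by decide : pathVertex 0 ≠ legVertex 0 1) (hf.injective h)
  rcases hf.mem_or_mem_of_walk (q₁ := pathVertex 1) (s := x 0) (t := y 0)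
      (by decide : G8.Adj (legVertex 0 0) (pathVertex 0)) (by decide) (by decide)
      (by decide : G8.Adj (pathVertex 2) (legVertex 1 2))
      (by rw [hu, card_insert_of_notMem (hxS 0), ha]) (by simp [hu]) (by simp [hu, hyS 0])
      (fun h => hxS 0 (h ▸ hyS 0)) hs₀ ht₀ with h | h <;>
    rw [hu', mem_insert] at h
  · exact h.elim (hx.ne (by decide)) (hxT 0 1 2 (by decide) (by decide) (by decide))
  · exact h.elim (fun h => hxS 1 (h ▸ hyS 0)) (hyT 0)

theorem not_isLayered : ¬ IsLayered G8 := by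
  rintro ⟨n, k, f, hinj, hcard, hadj⟩
  have hf : IsLayerEmbedding G8 k f := ⟨hinj, hcard, hadj⟩
  rcases hf.card_eq (pole 0) with h | h
  · refine card_pole_add_one_ne hf.compl ?_
    have := (f (pole 0)).card_le_univ
    simp only [card_compl, Fintype.card_fin] at this ⊢
    omega
  · exact card_pole_add_one_ne hf h

end G8

/-- `G_8` is a cubical graph of girth 8 that is not layered. -/
theorem G8_cubical_girth8_not_layered :
    IsCubical G8 ∧ G8.girth = 8 ∧ ¬ IsLayered G8 :=
  ⟨G8.isCubical, G8.girth_eq, G8.not_isLayered⟩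
end
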